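/- arXiv:2105.13323 — 3 statements merged into one kernel-verified Lean document; each statement's English description precedes it below -/
import Mathlib

section
/- For any function f : ℝⁿ → [0,∞), any α ∈ (0,1), and constants K > 1 and C₀ > 0, if the Hölder seminorm satisfies [f]_{C^α} ≤ K and ∫_{ℝⁿ} f |log f| ≤ C₀, then ‖f‖_{L^∞} ≤ C(n, α, C₀) · K^{n/(n+α)} (log K)^{-α/(n+α)} for some constant C depending only on n, α, C₀. -/
open MeasureTheory Metric Real Module

/-!
Suppose `f x ≥ 2 s` with `s ≥ 1`. The Hölder bound keeps `f ≥ s` on the ball of radius `r` with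
`K r ^ α = s`, so `∫ f |log f| ≥ ω r ^ n s log s = ω (s / K) ^ (n / α) s log s`, where `ω` is the
volume of the unit ball. At the level `s = a K ^ (n / (n + α)) (log K) ^ (-α / (n + α))` the powers
of `K` cancel exactly, `(s / K) ^ (n / α) s = a ^ ((n + α) / α) / log K`, while
`log s ≥ (n - α) / (n + α) · log K` because `log (log K) ≤ log K`. So the entropy is at least
`ω a (n - α) / (n + α)`, which exceeds `C₀` once `a` is large.
-/

theorem sub_le_of_holder_of_mem_ball {E : Type*} [SeminormedAddCommGroup E] {f : E → ℝ}
    {K α r : ℝ} (hK : 0 ≤ K) (hα : 0 ≤ α) (hf : ∀ x y, |f x - f y| ≤ K * ‖x - y‖ ^ α)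
    {x y : E} (hy : y ∈ ball x r) : f x - K * r ^ α ≤ f y := by
  have hxy : ‖x - y‖ < r := by rwa [mem_ball, dist_comm, dist_eq_norm] at hy
  have : f x - f y ≤ K * r ^ α :=
    calc f x - f y ≤ |f x - f y| := le_abs_self _
      _ ≤ K * ‖x - y‖ ^ α := hf x y
      _ ≤ K * r ^ α := by gcongr
  linarith

theorem mul_log_le_mul_abs_log {s t : ℝ} (hs : 1 ≤ s) (hst : s ≤ t) :
    s * log s ≤ t * |log t| := by
  have hlog : log s ≤ log t := log_le_log (by linarith) hst
  rw [abs_of_nonneg (log_nonneg (hs.trans hst))]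
  exact mul_le_mul hst hlog (log_nonneg hs) (by linarith)

theorem measureReal_mul_le_integral_of_le_on {X : Type*} [MeasurableSpace X] {μ : Measure X}
    {g : X → ℝ} {S : Set X} {c : ℝ} (hg : 0 ≤ g) (hint : Integrable g μ) (hS : MeasurableSet S)
    (hμS : μ S ≠ ⊤) (hc : ∀ y ∈ S, c ≤ g y) : μ.real S * c ≤ ∫ y, g y ∂μ :=
  (setIntegral_ge_of_const_le hS hμS hc hint.integrableOn).trans
    (setIntegral_le_integral hint (.of_forall hg))

theorem measureReal_ball_mul_le_integral_mul_abs_log {E : Type*} [NormedAddCommGroup E]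
    [NormedSpace ℝ E] [FiniteDimensional ℝ E] [MeasurableSpace E] [BorelSpace E]
    (μ : Measure E) [μ.IsAddHaarMeasure] {f : E → ℝ} {K α s : ℝ} (hf : ∀ x, 0 ≤ f x)
    (hK : 0 < K) (hα : 0 < α) (hHol : ∀ x y, |f x - f y| ≤ K * ‖x - y‖ ^ α)
    (hint : Integrable (fun x => f x * |log (f x)|) μ) (hs : 1 ≤ s) {x : E} (hx : 2 * s ≤ f x) :
    μ.real (ball 0 1) * (s / K) ^ (finrank ℝ E / α) * (s * log s)
      ≤ ∫ y, f y * |log (f y)| ∂μ := by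
  set r := (s / K) ^ (1 / α)
  have hsK : 0 < s / K := by positivity
  have hr : 0 < r := by positivity
  have hKr : K * r ^ α = s := by
    rw [← rpow_mul hsK.le, one_div_mul_cancel hα.ne', rpow_one]
    field_simp
  have hvol : μ.real (ball x r) = μ.real (ball 0 1) * (s / K) ^ (finrank ℝ E / α) := by
    rw [measureReal_def, Measure.addHaar_ball_of_pos μ x hr, ENNReal.toReal_mul,
      ENNReal.toReal_ofReal (by positivity), ← measureReal_def, ← rpow_natCast,
      ← rpow_mul hsK.le, mul_comm, one_div_mul_eq_div]
  rw [← hvol]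
  refine measureReal_mul_le_integral_of_le_on (fun y => mul_nonneg (hf y) (abs_nonneg _)) hint
    measurableSet_ball measure_ball_lt_top.ne fun y hy => mul_log_le_mul_abs_log hs ?_
  have := sub_le_of_holder_of_mem_ball hK.le hα.le hHol hy
  linarith

theorem sub_mul_log_le_log_mul_rpow_mul_log_rpow {a K p q : ℝ} (ha : 1 ≤ a) (hK : 1 < K)
    (hq : 0 ≤ q) : (p - q) * log K ≤ log (a * K ^ p * log K ^ (-q)) := by
  have hL : 0 < log K := log_pos hK
  rw [log_mul (by positivity) (by positivity), log_mul (by positivity) (by positivity),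
    log_rpow (by positivity), log_rpow hL]
  have hlogL : log (log K) ≤ log K := (log_le_sub_one_of_pos hL).trans (by linarith)
  nlinarith [log_nonneg ha]

theorem div_rpow_mul_self_eq {a K L n α s : ℝ} (ha : 0 < a) (hK : 0 < K) (hL : 0 < L)
    (hnα : n + α ≠ 0) (hα : α ≠ 0) (hs : s = a * K ^ (n / (n + α)) * L ^ (-(α / (n + α)))) :
    (s / K) ^ (n / α) * s = a ^ ((n + α) / α) / L := by
  have hs0 : 0 < s := hs ▸ by positivity
  refine log_injOn_pos (Set.mem_Ioi.2 (by positivity)) (Set.mem_Ioi.2 (by positivity)) ?_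
  subst hs
  rw [log_mul (by positivity) hs0.ne', log_rpow (by positivity), log_div (by positivity) hK.ne',
    log_div (by positivity) hL.ne', log_rpow ha, log_mul (by positivity) (by positivity),
    log_mul (by positivity) (by positivity), log_rpow hK, log_rpow hL]
  field_simp
  ring

theorem mul_le_div_rpow_mul_mul_log {a K n α s : ℝ} (ha : 1 ≤ a) (hK : 1 < K) (hα : 0 < α)
    (hαn : α ≤ n) (hs : s = a * K ^ (n / (n + α)) * log K ^ (-(α / (n + α))))
    (hlog : (n - α) / (n + α) * log K ≤ log s) :
    a * ((n - α) / (n + α)) ≤ (s / K) ^ (n / α) * (s * log s) := by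
  have hL : 0 < log K := log_pos hK
  have hγ : 0 ≤ (n - α) / (n + α) := div_nonneg (by linarith) (by linarith)
  have ha_le : a ≤ a ^ ((n + α) / α) :=
    self_le_rpow_of_one_le ha (by rw [le_div_iff₀ hα]; linarith)
  have hnα : n + α ≠ 0 := (by linarith : 0 < n + α).ne'
  rw [← mul_assoc, div_rpow_mul_self_eq (by positivity) (by positivity) hL hnα hα.ne' hs]
  calc a * ((n - α) / (n + α)) ≤ a ^ ((n + α) / α) * (log s / log K) :=
        mul_le_mul ha_le ((le_div_iff₀ hL).2 hlog) hγ (by positivity)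
    _ = a ^ ((n + α) / α) / log K * log s := by ring

/-- If `f ≥ 0` has Hölder seminorm `[f]_{C^α} ≤ K` (with `K > 1`) and
`∫ f|log f| ≤ C₀`, then `‖f‖_∞ ≤ C(n,α,C₀) K^{n/(n+α)} (log K)^{-α/(n+α)}`. -/
theorem stmt1 (n : ℕ) (hn : 0 < n) (α C₀ : ℝ)
    (hα : α ∈ Set.Ioo (0:ℝ) 1) (hC₀ : 0 < C₀) :
    ∃ C : ℝ, 0 < C ∧
      ∀ (f : EuclideanSpace ℝ (Fin n) → ℝ) (K : ℝ),
        (∀ x, 0 ≤ f x) → 1 < K →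
        (∀ x y, |f x - f y| ≤ K * ‖x - y‖ ^ α) →
        Integrable (fun x => f x * |Real.log (f x)|) →
        (∫ x, f x * |Real.log (f x)|) ≤ C₀ →
        ∀ x, f x ≤ C * K ^ ((n : ℝ) / ((n : ℝ) + α)) *
          Real.log K ^ (-(α / ((n : ℝ) + α))) := by
  obtain ⟨hα0, hα1⟩ := hα
  have hαn : α < n := hα1.trans_le (by exact_mod_cast hn)
  have hγ : 0 < ((n : ℝ) - α) / (n + α) := div_pos (by linarith) (by linarith)
  set ω := volume.real (ball (0 : EuclideanSpace ℝ (Fin n)) 1)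
  have hω : 0 < ω := ENNReal.toReal_pos (measure_ball_pos _ _ one_pos).ne' measure_ball_lt_top.ne
  set a := max 1 (2 * C₀ / (ω * ((n - α) / (n + α))))
  have ha : 2 * C₀ ≤ ω * (a * ((n - α) / (n + α))) := by
    rw [← mul_assoc, mul_right_comm, ← div_le_iff₀' (by positivity)]
    exact le_max_right _ _
  refine ⟨2 * a, by positivity, fun f K hf hK hHol hint hC x => ?_⟩
  by_contra! hfx
  set s := a * K ^ ((n : ℝ) / (n + α)) * log K ^ (-(α / (n + α))) with hs
  have hL : 0 < log K := log_pos hK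
  have hlog : ((n - α) / (n + α)) * log K ≤ log s := by
    rw [sub_div]
    exact sub_mul_log_le_log_mul_rpow_mul_log_rpow (le_max_left _ _) hK (by positivity)
  have hs1 : 1 ≤ s :=
    ((log_pos_iff (by positivity)).1 ((mul_pos hγ hL).trans_le hlog)).le
  have hball := measureReal_ball_mul_le_integral_mul_abs_log volume hf (by linarith) hα0 hHol
    hint hs1 (x := x) (by linarith)
  rw [finrank_euclideanSpace_fin, mul_assoc] at hball
  have hlevel := mul_le_div_rpow_mul_mul_log (le_max_left _ _) hK hα0 hαn.le hs hlog
  have := mul_le_mul_of_nonneg_left hlevel hω.le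
  linarith
end

section
/- Let u : [τ₀,∞) → [0,∞) and v : [τ₀,∞) → [0,∞) be continuous with u differentiable, 0 ≤ u(τ) ≤ v(τ) for all τ, and suppose u'(τ) ≤ −2v(τ) + ε(τ)(u(τ)+1)^{1/2} v(τ)^{1/2} where 0 ≤ ε(τ) < 1 for all τ ≥ τ₀. Then sup_{τ ≥ τ₀} u(τ) ≤ max{1, u(τ₀)}. -/
/-- If `0 ≤ u ≤ v` and `u' ≤ -2v + ε (u+1)^{1/2} v^{1/2}` with `0 ≤ ε < 1`,
then `sup_{τ ≥ τ₀} u(τ) ≤ max{1, u(τ₀)}`. -/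
theorem stmt10 (τ₀ : ℝ) (u v ε : ℝ → ℝ)
    (hu : Differentiable ℝ u) (hv : Continuous v)
    (huv : ∀ τ, τ₀ ≤ τ → 0 ≤ u τ ∧ u τ ≤ v τ)
    (hε : ∀ τ, τ₀ ≤ τ → 0 ≤ ε τ ∧ ε τ < 1)
    (hODE : ∀ τ, τ₀ ≤ τ →
      deriv u τ ≤ -2 * v τ + ε τ * (u τ + 1) ^ ((1:ℝ)/2) * v τ ^ ((1:ℝ)/2)) :
    ∀ τ, τ₀ ≤ τ → u τ ≤ max 1 (u τ₀) := by
  intro τ₁ hτ₁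
  set M := max 1 (u τ₀) with hM
  have hM1 : (1:ℝ) ≤ M := le_max_left _ _
  have hMu0 : u τ₀ ≤ M := le_max_right _ _
  by_contra hcon
  push_neg at hcon
  -- key derivative lemma
  have key : ∀ t, τ₀ ≤ t → 1 ≤ u t → deriv u t < 0 := by
    intro t ht h1
    obtain ⟨hu0, huv'⟩ := huv t ht
    obtain ⟨hε0, hε1⟩ := hε t ht
    have hv1 : (1:ℝ) ≤ v t := h1.trans huv'
    have hv0 : (0:ℝ) ≤ v t := by linarith
    have h2 : u t + 1 ≤ 2 * v t := by linarith
    have hs1 : (u t + 1) ^ ((1:ℝ)/2) = Real.sqrt (u t + 1) := by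
      rw [Real.sqrt_eq_rpow]
    have hs2 : v t ^ ((1:ℝ)/2) = Real.sqrt (v t) := by
      rw [Real.sqrt_eq_rpow]
    have hsq1 : Real.sqrt (u t + 1) ≤ Real.sqrt (2 * v t) :=
      Real.sqrt_le_sqrt h2
    have hmul : Real.sqrt (2 * v t) * Real.sqrt (v t) = Real.sqrt 2 * v t := by
      rw [Real.sqrt_mul (by norm_num), mul_assoc, Real.mul_self_sqrt hv0]
    have hsqrt2 : Real.sqrt 2 < 2 := by
      nlinarith [Real.sq_sqrt (by norm_num : (0:ℝ) ≤ 2), Real.sqrt_nonneg 2]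
    have hbound : ε t * (u t + 1) ^ ((1:ℝ)/2) * v t ^ ((1:ℝ)/2)
        ≤ Real.sqrt 2 * v t := by
      rw [hs1, hs2, ← hmul]
      have h01 : (0:ℝ) ≤ Real.sqrt (u t + 1) := Real.sqrt_nonneg _
      have h02 : (0:ℝ) ≤ Real.sqrt (v t) := Real.sqrt_nonneg _
      have h03 : (0:ℝ) ≤ Real.sqrt (2 * v t) := Real.sqrt_nonneg _
      have e1 : ε t * Real.sqrt (u t + 1) * Real.sqrt (v t)
          ≤ Real.sqrt (u t + 1) * Real.sqrt (v t) := by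
        nlinarith [mul_nonneg h01 h02]
      linarith [mul_le_mul_of_nonneg_right hsq1 h02]
    have := hODE t ht
    nlinarith
  have hτ01 : τ₀ < τ₁ := by
    rcases eq_or_lt_of_le hτ₁ with h | h
    · exact absurd hcon (by rw [← h]; linarith)
    · exact h
  set S := {t : ℝ | t ∈ Set.Icc τ₀ τ₁ ∧ u t ≤ M} with hS
  have hSne : S.Nonempty := ⟨τ₀, ⟨le_refl _, le_of_lt hτ01⟩, hMu0⟩
  have hSbdd : BddAbove S := ⟨τ₁, fun x hx => hx.1.2⟩
  have hSclosed : IsClosed S := by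
    apply IsClosed.inter isClosed_Icc
    exact isClosed_le hu.continuous continuous_const
  set s := sSup S with hs
  have hsS : s ∈ S := hSclosed.csSup_mem hSne hSbdd
  have hsle : u s ≤ M := hsS.2
  have hsIcc : s ∈ Set.Icc τ₀ τ₁ := hsS.1
  have hsτ1 : s < τ₁ := lt_of_le_of_ne hsIcc.2 (by
    intro h; rw [h] at hsle; linarith)
  -- MVT on [s, τ₁]
  obtain ⟨c, hcmem, hcd⟩ := exists_deriv_eq_slope u hsτ1
    (hu.continuous.continuousOn) (hu.differentiableOn)
  have hc0 : τ₀ ≤ c := le_trans hsIcc.1 (le_of_lt hcmem.1)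
  have hcgt : M < u c := by
    by_contra h
    push_neg at h
    have : c ∈ S := ⟨⟨hc0, le_of_lt hcmem.2⟩, h⟩
    have := le_csSup hSbdd this
    linarith [hcmem.1]
  have hder : 0 < deriv u c := by
    rw [hcd]
    apply div_pos (by linarith) (by linarith)
  have := key c hc0 (by linarith)
  linarith
end

section
/- Let ρ : ℝⁿ → [0,∞) be integrable, let g : [0,∞) → [0,∞) be non-decreasing and locally integrable with N := ∫_{ℝⁿ} g(|x|) ρ(x) dx < ∞, and let ρ* denote the symmetric decreasing rearrangement of ρ. Define G(s) = ∫₀^s g(r) r^{n−1} dr. Then for every x ∈ ℝⁿ, ρ*(x) ≤ N / (|S^{n−1}| G(|x|)), where |S^{n−1}| is the surface measure of the unit sphere. -/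
open MeasureTheory

/-- The symmetric decreasing rearrangement of a nonnegative function `ρ` on `ℝⁿ`:
`ρ*(x) = sup{t ≥ 0 : |{ρ > t}| > |B(0,‖x‖)|}`. -/
noncomputable def symmDecRearrangement (n : ℕ) (ρ : EuclideanSpace ℝ (Fin n) → ℝ)
    (x : EuclideanSpace ℝ (Fin n)) : ℝ :=
  sSup {t : ℝ | 0 ≤ t ∧
    volume (Metric.ball (0 : EuclideanSpace ℝ (Fin n)) ‖x‖) < volume {y | t < ρ y}}

/-!
Lieb's trick. Fix `x`, let `B` be the ball of radius `‖x‖` and `t ≥ 0` with `|B| < |{ρ > t}|`.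
Since `g(‖·‖)` is at most `g(‖x‖)` on `B` and at least `g(‖x‖)` off `B`, the ball minimizes
`∫_A g(‖y‖) dy` among sets `A` with `|A| ≥ |B|` (bathtub principle). Taking `A = {ρ > t}`,
`t · ∫_B g(‖y‖) dy ≤ ∫_A g(‖y‖) ρ(y) dy ≤ N`, and polar coordinates give
`∫_B g(‖y‖) dy = n |B₁| G(‖x‖)`. Taking the supremum over `t` bounds `ρ*(x)`.
-/

open Set Metric
open scoped ENNReal

section Bathtub

variable {α : Type*} [MeasurableSpace α] {μ : Measure α} {A B : Set α} {h : α → ℝ≥0∞}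
  {c : ℝ≥0∞}

theorem setLIntegral_le_setLIntegral_of_measure_le (hB : MeasurableSet B) (hA : MeasurableSet A)
    (hμB : μ B ≠ ∞) (hμ : μ B ≤ μ A) (hle : ∀ y ∈ B, h y ≤ c) (hge : ∀ y ∉ B, c ≤ h y) :
    ∫⁻ y in B, h y ∂μ ≤ ∫⁻ y in A, h y ∂μ := by
  have hdiff : μ (B \ A) ≤ μ (A \ B) := by
    have hfin : μ (B ∩ A) ≠ ∞ := ne_top_of_le_ne_top hμB (measure_mono inter_subset_left)
    rw [← ENNReal.add_le_add_iff_left hfin, measure_inter_add_sdiff B hA, inter_comm,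
      measure_inter_add_sdiff A hB]
    exact hμ
  calc ∫⁻ y in B, h y ∂μ = ∫⁻ y in B ∩ A, h y ∂μ + ∫⁻ y in B \ A, h y ∂μ :=
        (lintegral_inter_add_sdiff h B hA).symm
    _ ≤ ∫⁻ y in A ∩ B, h y ∂μ + ∫⁻ _ in B \ A, c ∂μ := by
        rw [inter_comm]
        exact add_le_add le_rfl (setLIntegral_mono' (hB.diff hA) fun y hy => hle y hy.1)
    _ ≤ ∫⁻ y in A ∩ B, h y ∂μ + ∫⁻ _ in A \ B, c ∂μ := by
        simp only [setLIntegral_const]; gcongr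
    _ ≤ ∫⁻ y in A ∩ B, h y ∂μ + ∫⁻ y in A \ B, h y ∂μ :=
        add_le_add le_rfl (setLIntegral_mono' (hA.diff hB) fun y hy => hge y hy.2)
    _ = ∫⁻ y in A, h y ∂μ := lintegral_inter_add_sdiff h A hB

theorem setLIntegral_mul_le_lintegral_mul_of_measure_le (hB : MeasurableSet B)
    (hA : MeasurableSet A) (hμB : μ B ≠ ∞) (hμ : μ B ≤ μ A) (hle : ∀ y ∈ B, h y ≤ c)
    (hge : ∀ y ∉ B, c ≤ h y)
    {f : α → ℝ≥0∞} {t : ℝ≥0∞} (ht : ∀ y ∈ A, t ≤ f y) :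
    (∫⁻ y in B, h y ∂μ) * t ≤ ∫⁻ y, h y * f y ∂μ :=
  calc (∫⁻ y in B, h y ∂μ) * t ≤ (∫⁻ y in A, h y ∂μ) * t :=
        mul_le_mul_left (setLIntegral_le_setLIntegral_of_measure_le hB hA hμB hμ hle hge) t
    _ ≤ ∫⁻ y in A, h y * t ∂μ := lintegral_mul_const_le _ _
    _ ≤ ∫⁻ y in A, h y * f y ∂μ := setLIntegral_mono' hA fun y hy => by gcongr; exact ht y hy
    _ ≤ ∫⁻ y, h y * f y ∂μ := setLIntegral_le_lintegral _ _

end Bathtub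

section Radial

theorem MonotoneOn.measurable_comp_norm {E : Type*} [NormedAddCommGroup E] [MeasurableSpace E]
    [OpensMeasurableSpace E] {g : ℝ → ℝ} (hg : MonotoneOn g (Ici 0)) :
    Measurable fun x : E => g ‖x‖ := by
  have hmono : Monotone fun r => g (max r 0) := fun a b hab =>
    hg (le_max_right a 0) (le_max_right b 0) (max_le_max_right 0 hab)
  simpa [Function.comp_def] using hmono.measurable.comp (measurable_norm (α := E))

variable {E F : Type*} [NormedAddCommGroup E] [NormedSpace ℝ E] [FiniteDimensional ℝ E]
  [MeasurableSpace E] [BorelSpace E] [NormedAddCommGroup F] [NormedSpace ℝ F]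

theorem setIntegral_ball_fun_norm_addHaar [Nontrivial E] (μ : Measure E) [μ.IsAddHaarMeasure]
    (f : ℝ → F) {R : ℝ} (hR : 0 ≤ R) :
    ∫ x in ball (0 : E) R, f ‖x‖ ∂μ = Module.finrank ℝ E • μ.real (ball 0 1) •
      ∫ r in 0..R, r ^ (Module.finrank ℝ E - 1) • f r := by
  have hind : (ball (0 : E) R).indicator (fun x => f ‖x‖) = fun x => (Iio R).indicator f ‖x‖ := by
    ext x; simp [indicator]
  rw [← integral_indicator measurableSet_ball, hind, integral_fun_norm_addHaar,
    intervalIntegral.integral_of_le hR, integral_Ioc_eq_integral_Ioo, ← Ioi_inter_Iio,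
    ← setIntegral_indicator measurableSet_Iio]
  congr 3 with r
  by_cases hr : r < R <;> simp [hr]

theorem MonotoneOn.integrableOn_ball_comp_norm (μ : Measure E) [μ.IsAddHaarMeasure]
    {g : ℝ → ℝ} (hg : MonotoneOn g (Ici 0)) (R : ℝ) :
    IntegrableOn (fun x : E => g ‖x‖) (ball 0 R) μ := by
  refine Integrable.mono' (integrableOn_const (C := |g 0| + |g R|) measure_ball_lt_top.ne)
    hg.measurable_comp_norm.aestronglyMeasurable.restrict ?_
  filter_upwards [ae_restrict_mem measurableSet_ball] with x hx
  rw [mem_ball_zero_iff] at hx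
  have hlow : g 0 ≤ g ‖x‖ := hg self_mem_Ici (norm_nonneg x) (norm_nonneg x)
  have hupp : g ‖x‖ ≤ g R := hg (norm_nonneg x) ((norm_nonneg x).trans hx.le) hx.le
  rw [Real.norm_eq_abs, abs_le]
  constructor <;> linarith [neg_abs_le (g 0), le_abs_self (g R), abs_nonneg (g 0), abs_nonneg (g R)]

end Radial

section Euclidean

variable {n : ℕ}

theorem setIntegral_ball_euclidean_fun_norm (hn : 0 < n) (f : ℝ → ℝ) {R : ℝ} (hR : 0 ≤ R) :
    ∫ y in ball (0 : EuclideanSpace ℝ (Fin n)) R, f ‖y‖ =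
      n * (volume (ball (0 : EuclideanSpace ℝ (Fin n)) 1)).toReal *
        ∫ r in 0..R, f r * r ^ ((n : ℝ) - 1) := by
  have : Nontrivial (EuclideanSpace ℝ (Fin n)) :=
    Module.nontrivial_of_finrank_pos (R := ℝ) (by rwa [finrank_euclideanSpace_fin])
  rw [setIntegral_ball_fun_norm_addHaar volume f hR, finrank_euclideanSpace_fin, nsmul_eq_mul,
    smul_eq_mul, mul_assoc]
  congr 3 with r
  rw [smul_eq_mul, mul_comm, ← Real.rpow_natCast, Nat.cast_sub hn, Nat.cast_one]

theorem lintegral_ball_euclidean_ofReal_comp_norm (hn : 0 < n) {g : ℝ → ℝ} (hg0 : ∀ r, 0 ≤ g r)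
    (hg : MonotoneOn g (Ici 0)) {R : ℝ} (hR : 0 ≤ R) :
    ∫⁻ y in ball (0 : EuclideanSpace ℝ (Fin n)) R, ENNReal.ofReal (g ‖y‖) =
      ENNReal.ofReal (n * (volume (ball (0 : EuclideanSpace ℝ (Fin n)) 1)).toReal *
        ∫ r in 0..R, g r * r ^ ((n : ℝ) - 1)) := by
  rw [← setIntegral_ball_euclidean_fun_norm hn g hR, ofReal_integral_eq_lintegral_ofReal
    (hg.integrableOn_ball_comp_norm volume R) (ae_of_all _ fun y => hg0 _)]

theorem mul_symmDecRearrangement_le (ρ : EuclideanSpace ℝ (Fin n) → ℝ)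
    (x : EuclideanSpace ℝ (Fin n)) {c N : ℝ} (hc : 0 ≤ c) (hN : 0 ≤ N)
    (h : ∀ t, 0 ≤ t → volume (ball (0 : EuclideanSpace ℝ (Fin n)) ‖x‖) < volume {y | t < ρ y} →
      c * t ≤ N) :
    c * symmDecRearrangement n ρ x ≤ N := by
  rw [symmDecRearrangement, ← smul_eq_mul, ← Real.sSup_smul_of_nonneg hc]
  refine Real.sSup_le ?_ hN
  rintro _ ⟨t, ⟨ht, hvol⟩, rfl⟩
  exact h t ht hvol

end Euclidean

theorem stmt18_general (n : ℕ) (hn : 0 < n) (ρ : EuclideanSpace ℝ (Fin n) → ℝ) (g : ℝ → ℝ)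
    (hm : Measurable ρ) (h0 : ∀ x, 0 ≤ ρ x)
    (hg0 : ∀ r, 0 ≤ g r) (hgm : MonotoneOn g (Set.Ici (0:ℝ)))
    (hN : Integrable (fun x : EuclideanSpace ℝ (Fin n) => g ‖x‖ * ρ x)) :
    ∀ x : EuclideanSpace ℝ (Fin n),
      ((n : ℝ) * (volume (Metric.ball (0 : EuclideanSpace ℝ (Fin n)) 1)).toReal) *
          (∫ r in (0:ℝ)..‖x‖, g r * r ^ ((n : ℝ) - 1)) *
          symmDecRearrangement n ρ x
        ≤ ∫ x : EuclideanSpace ℝ (Fin n), g ‖x‖ * ρ x := by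
  intro x
  have hN0 : 0 ≤ ∫ y, g ‖y‖ * ρ y := integral_nonneg fun y => mul_nonneg (hg0 _) (h0 _)
  have hG0 : 0 ≤ ∫ r in (0:ℝ)..‖x‖, g r * r ^ ((n : ℝ) - 1) :=
    intervalIntegral.integral_nonneg (norm_nonneg x)
      fun r hr => mul_nonneg (hg0 r) (Real.rpow_nonneg hr.1 _)
  have hNL : ENNReal.ofReal (∫ y, g ‖y‖ * ρ y) =
      ∫⁻ y, ENNReal.ofReal (g ‖y‖) * ENNReal.ofReal (ρ y) := by
    simp_rw [← ENNReal.ofReal_mul (hg0 _)]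
    exact ofReal_integral_eq_lintegral_ofReal hN (ae_of_all _ fun y => mul_nonneg (hg0 _) (h0 _))
  refine mul_symmDecRearrangement_le ρ x (by positivity) hN0 fun t ht hvol => ?_
  rw [← ENNReal.ofReal_le_ofReal_iff hN0, ENNReal.ofReal_mul (by positivity),
    ← lintegral_ball_euclidean_ofReal_comp_norm hn hg0 hgm (norm_nonneg x), hNL]
  refine setLIntegral_mul_le_lintegral_mul_of_measure_le measurableSet_ball
    (measurableSet_lt measurable_const hm) measure_ball_lt_top.ne hvol.le
    (c := ENNReal.ofReal (g ‖x‖)) ?_ ?_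
    fun y hy => ENNReal.ofReal_le_ofReal (le_of_lt hy)
  · intro y hy
    rw [mem_ball_zero_iff] at hy
    exact ENNReal.ofReal_le_ofReal (hgm (norm_nonneg y) (norm_nonneg x) hy.le)
  · intro y hy
    rw [mem_ball_zero_iff, not_lt] at hy
    exact ENNReal.ofReal_le_ofReal (hgm (norm_nonneg x) (norm_nonneg y) hy)

/-- Lieb's trick: if `N = ∫ g(|x|)ρ < ∞` with `g ≥ 0` non-decreasing locally
integrable, then `|S^{n-1}| G(|x|) ρ*(x) ≤ N`, i.e. `ρ*(x) ≤ N/(|S^{n-1}| G(|x|))`,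
where `G(s) = ∫₀^s g(r) r^{n-1} dr` and `|S^{n-1}| = n·|B₁|`. -/
theorem stmt18 (n : ℕ) (hn : 0 < n) (ρ : EuclideanSpace ℝ (Fin n) → ℝ) (g : ℝ → ℝ)
    (hm : Measurable ρ) (h0 : ∀ x, 0 ≤ ρ x) (hi : Integrable ρ)
    (hg0 : ∀ r, 0 ≤ g r) (hgm : MonotoneOn g (Set.Ici (0:ℝ)))
    (hgl : ∀ s : ℝ, 0 < s → IntegrableOn g (Set.Icc 0 s))
    (hN : Integrable (fun x : EuclideanSpace ℝ (Fin n) => g ‖x‖ * ρ x)) :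
    ∀ x : EuclideanSpace ℝ (Fin n),
      ((n : ℝ) * (volume (Metric.ball (0 : EuclideanSpace ℝ (Fin n)) 1)).toReal) *
          (∫ r in (0:ℝ)..‖x‖, g r * r ^ ((n : ℝ) - 1)) *
          symmDecRearrangement n ρ x
        ≤ ∫ x : EuclideanSpace ℝ (Fin n), g ‖x‖ * ρ x :=
  stmt18_general n hn ρ g hm h0 hg0 hgm hN
end
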